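/- In the monoid F₀ one has π(η_0) * π(ε_0) ≠ 1 (although π(ε_0) * π(η_0) = 1); in particular F₀ is a monoid possessing a left-invertible element that is not right-invertible, arising as the initial object of the variety of adjunction structures. -/

import Mathlib

/-- The free monoid on the generators `η_k` and `ε_k` (`k ∈ ℕ`). -/
abbrev FreeAdj := FreeMonoid (Bool × ℕ)

/-- The generator `η_k`. -/
def ηgen (k : ℕ) : FreeAdj := FreeMonoid.of (true, k)

/-- The generator `ε_k`. -/
def εgen (k : ℕ) : FreeAdj := FreeMonoid.of (false, k)

/-- The set of relation pairs `R₀`. -/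
inductive R0 : FreeAdj → FreeAdj → Prop
  | ee {i j : ℕ} (h : i < j) : R0 (εgen i * εgen j) (εgen (j - 1) * εgen i)
  | hh {i j : ℕ} (h : i < j) : R0 (ηgen j * ηgen i) (ηgen i * ηgen (j - 1))
  | eh_gt {i j : ℕ} (h : i + 1 < j) : R0 (εgen i * ηgen j) (ηgen (j - 1) * εgen i)
  | eh_lt {i j : ℕ} (h : j < i) : R0 (εgen i * ηgen j) (ηgen j * εgen (i - 1))
  | eh_eq {i : ℕ} (h : 0 < i) : R0 (εgen i * ηgen i) (εgen (i - 1) * ηgen i)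
  | eh_succ (i : ℕ) : R0 (εgen i * ηgen (i + 1)) (εgen i * ηgen i)
  | eh_zero : R0 (εgen 0 * ηgen 0) 1

/-- The monoid `F₀`: the quotient of the free monoid by the congruence
generated by `R₀`. -/
abbrev F0 := (conGen R0).Quotient

/-- The quotient map `π : F →* F₀`. -/
def πmap : FreeAdj →* F0 := (conGen R0).mk'

/-!
Proof idea: `F₀` acts on `ℕ` by letting `η_k` act as the coface map skipping `k` and `ε_k` as
the codegeneracy map identifying `k` and `k + 1`; the relations `R₀` are the cosimplicial
identities, so they hold in this action. In it `ε₀ η₀` acts as the identity, whereas `η₀ ε₀`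
sends `0` to `1`.
-/

lemma Function.End.mul_apply {α : Type*} (f g : Function.End α) (a : α) :
    (f * g) a = f (g a) :=
  rfl

def coface (k : ℕ) : Function.End ℕ := fun n => if n < k then n else n + 1

def codegeneracy (k : ℕ) : Function.End ℕ := fun n => if n ≤ k then n else n - 1

def cosimplicialAction : FreeAdj →* Function.End ℕ :=
  FreeMonoid.lift fun
    | (true, k) => coface k
    | (false, k) => codegeneracy k

@[simp]
lemma cosimplicialAction_ηgen (k : ℕ) : cosimplicialAction (ηgen k) = coface k := rfl

@[simp]
lemma cosimplicialAction_εgen (k : ℕ) : cosimplicialAction (εgen k) = codegeneracy k := rfl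

lemma cosimplicialAction_eq_of_R0 {x y : FreeAdj} (h : R0 x y) :
    cosimplicialAction x = cosimplicialAction y := by
  cases h <;>
  · funext n
    simp only [map_mul, map_one, cosimplicialAction_ηgen, cosimplicialAction_εgen,
      Function.End.mul_apply, coface, codegeneracy]
    split_ifs <;> first | rfl | omega

lemma conGen_R0_le_ker : conGen R0 ≤ Con.ker cosimplicialAction :=
  Con.conGen_le.mpr fun _ _ h => cosimplicialAction_eq_of_R0 h

def F0.action : F0 →* Function.End ℕ := (conGen R0).lift cosimplicialAction conGen_R0_le_ker

@[simp]
lemma F0.action_πmap (x : FreeAdj) : F0.action (πmap x) = cosimplicialAction x := rfl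

lemma πmap_eq_of_R0 {x y : FreeAdj} (h : R0 x y) : πmap x = πmap y :=
  (Con.eq _).mpr (ConGen.Rel.of _ _ h)

/-- In `F₀`, `π η₀ * π ε₀ ≠ 1` although `π ε₀ * π η₀ = 1`: the monoid `F₀`
has a left-invertible element which is not right-invertible. -/
theorem eta_eps_ne_one :
    πmap (ηgen 0) * πmap (εgen 0) ≠ 1 ∧ πmap (εgen 0) * πmap (ηgen 0) = 1 := by
  constructor
  · intro h
    have h0 : (coface 0 * codegeneracy 0) 0 = (1 : Function.End ℕ) 0 := by
      simpa using congrArg (fun x => F0.action x 0) h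
    exact absurd h0 (by decide)
  · simpa only [map_mul, map_one] using πmap_eq_of_R0 R0.eh_zero
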